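/- arXiv:1402.4714 — 2 statements merged into one kernel-verified Lean document; each statement's English description precedes it below -/
import Mathlib

section
/- With G a finite abelian group acting on a left k[G]-module algebra B (k containing enough roots of unity), suppose B is semisimple as a module algebra, i.e. every left ideal and k[G]-submodule L of B has a complement L' which is also a left ideal and k[G]-submodule. If L is a two-sided ideal and a left k[G]-submodule of B, then the ideal of A = B # k[G] generated by L # e_m equals (L # e_m)(L # 1). -/
/-!
Semisimplicity gives a complement `L''` of `L` which is a `G`-stable left ideal. Write
`1 = x + y` with `x ∈ L`, `y ∈ L''`; applying `g ∈ G` and using uniqueness of the decomposition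
shows that `x` is `G`-invariant, and since `L` is a right ideal, `b * y ∈ L ⊓ L'' = 0` for
`b ∈ L`, so `x` is a right unit for `L`. Being invariant, `x` commutes with `e_m`, whence
`b # e_m = (b # e_m)(x # 1) ∈ (L # e_m)(L # 1)`. Conversely `e_m` absorbs group elements on
either side up to the scalar `χ_m(g)⁻¹`, so `(L # e_m)(L # 1)` is stable under multiplication by
the monomials `d # g`, which span `A`; hence it is an ideal, contained in every ideal
containing `L # e_m`.
-/

open Submodule Pointwise

section Span

variable {k A : Type*} [CommSemiring k] [Semiring A] [Algebra k A]

theorem Submodule.mul_mem_span_of_span_eq_top {s t : Set A} (hs : span k s = ⊤)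
    (h : ∀ a ∈ s, ∀ x ∈ t, a * x ∈ span k t) (a : A) {x : A} (hx : x ∈ span k t) :
    a * x ∈ span k t := by
  have hax : a * x ∈ span k (s * t) := by
    rw [← span_mul_span, hs]
    exact mul_mem_mul mem_top hx
  refine span_le.mpr ?_ hax
  rintro _ ⟨a, ha, x, hx, rfl⟩
  exact h a ha x hx

theorem Submodule.mul_mem_span_of_span_eq_top' {s t : Set A} (hs : span k s = ⊤)
    (h : ∀ a ∈ s, ∀ x ∈ t, x * a ∈ span k t) (a : A) {x : A} (hx : x ∈ span k t) :
    x * a ∈ span k t := by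
  have hxa : x * a ∈ span k (t * s) := by
    rw [← span_mul_span, hs]
    exact mul_mem_mul hx mem_top
  refine span_le.mpr ?_ hxa
  rintro _ ⟨x, hx, a, ha, rfl⟩
  exact h a ha x hx

end Span

theorem Submodule.apply_eq_self_of_disjoint {R M F : Type*} [Ring R] [AddCommGroup M]
    [Module R M] [FunLike F M M] [AddMonoidHomClass F M M] {p q : Submodule R M}
    (hpq : Disjoint p q) (f : F) (hp : ∀ x ∈ p, f x ∈ p) (hq : ∀ y ∈ q, f y ∈ q)
    {x y : M} (hx : x ∈ p) (hy : y ∈ q) (hfix : f (x + y) = x + y) : f x = x := by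
  have hsub : f x - x = y - f y := by
    rw [map_add] at hfix
    rw [sub_eq_sub_iff_add_eq_add, hfix, add_comm]
  refine sub_eq_zero.mp (disjoint_def.mp hpq _ (sub_mem (hp x hx) hx) ?_)
  rw [hsub]
  exact sub_mem hy (hq y hy)

section TwistedGroupSum

variable {k G A : Type*} [CommRing k] [Group G] [Fintype G] [Ring A] [Algebra k A]
  (ψ : G →* kˣ) (ιG : G →* A)

theorem sum_smul_mul_of (g : G) :
    (∑ h, (ψ h : k) • ιG h) * ιG g = (ψ g⁻¹ : k) • ∑ h, (ψ h : k) • ιG h := by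
  rw [Finset.sum_mul, Finset.smul_sum]
  refine Fintype.sum_equiv (Equiv.mulRight g) _ _ fun h => ?_
  simp [smul_smul, mul_left_comm _ (ψ h : k)]

theorem of_mul_sum_smul (g : G) :
    ιG g * ∑ h, (ψ h : k) • ιG h = (ψ g⁻¹ : k) • ∑ h, (ψ h : k) • ιG h := by
  rw [Finset.mul_sum, Finset.smul_sum]
  refine Fintype.sum_equiv (Equiv.mulLeft g) _ _ fun h => ?_
  simp [smul_smul]

end TwistedGroupSum

theorem exists_invariant_right_unit {k G B : Type*} [CommRing k] [Monoid G] [Ring B]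
    [Algebra k B] (τ : G →* (B ≃ₐ[k] B)) {L L'' : Submodule k B}
    (hLright : ∀ c : B, ∀ b ∈ L, b * c ∈ L) (hLmod : ∀ g : G, ∀ b ∈ L, τ g b ∈ L)
    (hL''left : ∀ c : B, ∀ b ∈ L'', c * b ∈ L'') (hL''mod : ∀ g : G, ∀ b ∈ L'', τ g b ∈ L'')
    (hcompl : IsCompl L L'') :
    ∃ x ∈ L, (∀ g : G, τ g x = x) ∧ ∀ b ∈ L, b * x = b := by
  have h1 : (1 : B) ∈ L ⊔ L'' := hcompl.sup_eq_top ▸ mem_top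
  obtain ⟨x, hx, y, hy, hxy⟩ := mem_sup.mp h1
  refine ⟨x, hx, fun g => ?_, fun b hb => ?_⟩
  · exact apply_eq_self_of_disjoint hcompl.disjoint (τ g) (hLmod g) (hL''mod g) hx hy
      (by rw [hxy, map_one])
  · have hby : b * y = 0 :=
      disjoint_def.mp hcompl.disjoint _ (hLright y b hb) (hL''left b y hy)
    calc b * x = b * (x + y) := by rw [mul_add, hby, add_zero]
      _ = b := by rw [hxy, mul_one]

section SmashProduct

variable {k G B A : Type*} [CommRing k] [Group G] [Ring B] [Algebra k B]
  [Ring A] [Algebra k A] {τ : G →* (B ≃ₐ[k] B)} {ιB : B →ₐ[k] A} {ιG : G →* A}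

theorem ιB_mul_ιG (hcomm : ∀ (g : G) (b : B), ιG g * ιB b = ιB (τ g b) * ιG g) (b : B)
    (g : G) : ιB b * ιG g = ιG g * ιB (τ g⁻¹ b) := by
  rw [hcomm, ← AlgEquiv.mul_apply, ← map_mul, mul_inv_cancel, map_one, AlgEquiv.one_apply]

variable [Fintype G] {ψ : G →* kˣ} {c : k} {e : A}

theorem ιG_mul_e (he : e = c • ∑ h, (ψ h : k) • ιG h) (g : G) :
    ιG g * e = (ψ g⁻¹ : k) • e := by
  rw [he, mul_smul_comm, of_mul_sum_smul, smul_comm]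

theorem e_mul_ιG (he : e = c • ∑ h, (ψ h : k) • ιG h) (g : G) :
    e * ιG g = (ψ g⁻¹ : k) • e := by
  rw [he, smul_mul_assoc, sum_smul_mul_of, smul_comm]

theorem commute_e_ιB_of_invariant
    (hcomm : ∀ (g : G) (b : B), ιG g * ιB b = ιB (τ g b) * ιG g)
    (he : e = c • ∑ h, (ψ h : k) • ιG h) {x : B} (hx : ∀ g : G, τ g x = x) :
    Commute e (ιB x) := by
  have hxG : ∀ g : G, Commute (ιG g) (ιB x) := fun g => by
    rw [Commute, SemiconjBy, hcomm, hx]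
  rw [he]
  exact ((Commute.sum_left _ _ _ fun g _ => (hxG g).smul_left _)).smul_left _

theorem monomial_mul_generator (hcomm : ∀ (g : G) (b : B), ιG g * ιB b = ιB (τ g b) * ιG g)
    (he : e = c • ∑ h, (ψ h : k) • ιG h) (d : B) (g : G) (b b' : B) :
    (ιB d * ιG g) * (ιB b * e * ιB b') = (ψ g⁻¹ : k) • (ιB (d * τ g b) * e * ιB b') := by
  calc (ιB d * ιG g) * (ιB b * e * ιB b')
      = ιB d * (ιG g * ιB b) * e * ιB b' := by simp only [mul_assoc]
    _ = ιB (d * τ g b) * (ιG g * e) * ιB b' := by rw [hcomm, map_mul]; simp only [mul_assoc]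
    _ = (ψ g⁻¹ : k) • (ιB (d * τ g b) * e * ιB b') := by
      rw [ιG_mul_e he, mul_smul_comm, smul_mul_assoc]

theorem generator_mul_monomial (hcomm : ∀ (g : G) (b : B), ιG g * ιB b = ιB (τ g b) * ιG g)
    (he : e = c • ∑ h, (ψ h : k) • ιG h) (d : B) (g : G) (b b' : B) :
    (ιB b * e * ιB b') * (ιB d * ιG g) = (ψ g⁻¹ : k) • (ιB b * e * ιB (τ g⁻¹ (b' * d))) := by
  calc (ιB b * e * ιB b') * (ιB d * ιG g)
      = ιB b * e * (ιB (b' * d) * ιG g) := by rw [map_mul]; simp only [mul_assoc]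
    _ = ιB b * (e * ιG g) * ιB (τ g⁻¹ (b' * d)) := by
      rw [ιB_mul_ιG hcomm]; simp only [mul_assoc]
    _ = (ψ g⁻¹ : k) • (ιB b * e * ιB (τ g⁻¹ (b' * d))) := by
      rw [e_mul_ιG he, mul_smul_comm, smul_mul_assoc]

end SmashProduct

theorem stmt15_general (k G B A ι : Type) [Field k] [CommGroup G] [Fintype G]
    (χ : G →* G →* kˣ)
    [Ring B] [Algebra k B] (τ : G →* (B ≃ₐ[k] B))
    [Ring A] [Algebra k A] (ιB : B →ₐ[k] A) (ιG : G →* A)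
    (hcomm : ∀ (g : G) (b : B), ιG g * ιB b = ιB (τ g b) * ιG g)
    (bB : Module.Basis ι k B) (bA : Module.Basis (ι × G) k A)
    (hbA : ∀ p : ι × G, bA p = ιB (bB p.1) * ιG p.2)
    (e : G → A)
    (he : ∀ m : G, e m = (Fintype.card G : k)⁻¹ • ∑ g : G, ((χ m g : kˣ) : k) • ιG g)
    -- `B` is semisimple as a module algebra:
    (hss : ∀ L' : Submodule k B, (∀ c : B, ∀ b ∈ L', c * b ∈ L') →
      (∀ g : G, ∀ b ∈ L', τ g b ∈ L') →
      ∃ L'' : Submodule k B, (∀ c : B, ∀ b ∈ L'', c * b ∈ L'') ∧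
        (∀ g : G, ∀ b ∈ L'', τ g b ∈ L'') ∧ IsCompl L' L'')
    (L : Submodule k B)
    (hLideal : ∀ c : B, ∀ b ∈ L, c * b ∈ L)
    (hLideal' : ∀ c : B, ∀ b ∈ L, b * c ∈ L)
    (hLmod : ∀ g : G, ∀ b ∈ L, τ g b ∈ L)
    (m : G) :
    -- `(L # e_m)(L # 1)` is the two-sided ideal of `A` generated by `L # e_m`:
    Submodule.span k {x : A | ∃ b ∈ L, x = ιB b * e m}
        ≤ Submodule.span k {x : A | ∃ b ∈ L, ∃ c ∈ L, x = (ιB b * e m) * ιB c} ∧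
    (∀ (a x : A), x ∈ Submodule.span k {x : A | ∃ b ∈ L, ∃ c ∈ L, x = (ιB b * e m) * ιB c} →
      a * x ∈ Submodule.span k {x : A | ∃ b ∈ L, ∃ c ∈ L, x = (ιB b * e m) * ιB c} ∧
      x * a ∈ Submodule.span k {x : A | ∃ b ∈ L, ∃ c ∈ L, x = (ιB b * e m) * ιB c}) ∧
    (∀ J : Submodule k A, (∀ (a x : A), x ∈ J → a * x ∈ J ∧ x * a ∈ J) →
      Submodule.span k {x : A | ∃ b ∈ L, x = ιB b * e m} ≤ J →
      Submodule.span k {x : A | ∃ b ∈ L, ∃ c ∈ L, x = (ιB b * e m) * ιB c} ≤ J) := by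
  obtain ⟨L'', hL''ideal, hL''mod, hcompl⟩ := hss L hLideal hLmod
  obtain ⟨x, hxL, hxinv, hxunit⟩ :=
    exists_invariant_right_unit τ hLideal' hLmod hL''ideal hL''mod hcompl
  have hmonomials : span k (Set.range fun p : ι × G => ιB (bB p.1) * ιG p.2) = ⊤ := by
    simpa only [← hbA] using bA.span_eq
  refine ⟨span_le.mpr ?_, fun a y hy => ⟨?_, ?_⟩, fun J hJ hle => span_le.mpr ?_⟩
  · rintro _ ⟨b, hb, rfl⟩
    refine subset_span ⟨b, hb, x, hxL, ?_⟩
    rw [mul_assoc, (commute_e_ιB_of_invariant hcomm (he m) hxinv).eq, ← mul_assoc, ← map_mul,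
      hxunit b hb]
  · refine mul_mem_span_of_span_eq_top hmonomials ?_ a hy
    rintro _ ⟨p, rfl⟩ _ ⟨b, hb, b', hb', rfl⟩
    rw [monomial_mul_generator hcomm (he m)]
    exact smul_mem _ _ (subset_span ⟨_, hLideal _ _ (hLmod _ _ hb), b', hb', rfl⟩)
  · refine mul_mem_span_of_span_eq_top' hmonomials ?_ a hy
    rintro _ ⟨p, rfl⟩ _ ⟨b, hb, b', hb', rfl⟩
    rw [generator_mul_monomial hcomm (he m)]
    exact smul_mem _ _ (subset_span ⟨b, hb, _, hLmod _ _ (hLideal' _ _ hb'), rfl⟩)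
  · rintro _ ⟨b, hb, b', -, rfl⟩
    exact (hJ _ _ (hle (subset_span ⟨b, hb, rfl⟩))).2

/-- With `G` a finite abelian group acting on a left `k[G]`-module algebra
`B` (`k` containing enough roots of unity), suppose `B` is semisimple as a module algebra,
i.e. every left ideal and `k[G]`-submodule of `B` has a complement of the same kind.  If `L`
is a two-sided ideal and a left `k[G]`-submodule of `B`, then the ideal of the smash product
`A = B # k[G]` generated by `L # e_m` equals `(L # e_m)(L # 1)`. -/
theorem stmt15 (k G B A ι : Type) [Field k] [CommGroup G] [Fintype G]
    (χ : G →* G →* kˣ)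
    (hχ : ∀ m : G, m ≠ 1 → ∑ g : G, ((χ m g : kˣ) : k) = 0)
    (hχ' : ∀ g : G, g ≠ 1 → ∑ m : G, ((χ m g : kˣ) : k) = 0)
    (hroot : ∃ lam : k, IsPrimitiveRoot lam (Fintype.card G))
    (hcard : (Fintype.card G : k) ≠ 0)
    [Ring B] [Algebra k B] (τ : G →* (B ≃ₐ[k] B))
    [Ring A] [Algebra k A] (ιB : B →ₐ[k] A) (ιG : G →* A)
    (hcomm : ∀ (g : G) (b : B), ιG g * ιB b = ιB (τ g b) * ιG g)
    (bB : Module.Basis ι k B) (bA : Module.Basis (ι × G) k A)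
    (hbA : ∀ p : ι × G, bA p = ιB (bB p.1) * ιG p.2)
    (e : G → A)
    (he : ∀ m : G, e m = (Fintype.card G : k)⁻¹ • ∑ g : G, ((χ m g : kˣ) : k) • ιG g)
    -- `B` is semisimple as a module algebra:
    (hss : ∀ L' : Submodule k B, (∀ c : B, ∀ b ∈ L', c * b ∈ L') →
      (∀ g : G, ∀ b ∈ L', τ g b ∈ L') →
      ∃ L'' : Submodule k B, (∀ c : B, ∀ b ∈ L'', c * b ∈ L'') ∧
        (∀ g : G, ∀ b ∈ L'', τ g b ∈ L'') ∧ IsCompl L' L'')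
    (L : Submodule k B)
    (hLideal : ∀ c : B, ∀ b ∈ L, c * b ∈ L)
    (hLideal' : ∀ c : B, ∀ b ∈ L, b * c ∈ L)
    (hLmod : ∀ g : G, ∀ b ∈ L, τ g b ∈ L)
    (m : G) :
    -- `(L # e_m)(L # 1)` is the two-sided ideal of `A` generated by `L # e_m`:
    Submodule.span k {x : A | ∃ b ∈ L, x = ιB b * e m}
        ≤ Submodule.span k {x : A | ∃ b ∈ L, ∃ c ∈ L, x = (ιB b * e m) * ιB c} ∧
    (∀ (a x : A), x ∈ Submodule.span k {x : A | ∃ b ∈ L, ∃ c ∈ L, x = (ιB b * e m) * ιB c} →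
      a * x ∈ Submodule.span k {x : A | ∃ b ∈ L, ∃ c ∈ L, x = (ιB b * e m) * ιB c} ∧
      x * a ∈ Submodule.span k {x : A | ∃ b ∈ L, ∃ c ∈ L, x = (ιB b * e m) * ιB c}) ∧
    (∀ J : Submodule k A, (∀ (a x : A), x ∈ J → a * x ∈ J ∧ x * a ∈ J) →
      Submodule.span k {x : A | ∃ b ∈ L, x = ιB b * e m} ≤ J →
      Submodule.span k {x : A | ∃ b ∈ L, ∃ c ∈ L, x = (ιB b * e m) * ιB c} ≤ J) :=
  stmt15_general k G B A ι χ τ ιB ιG hcomm bB bA hbA e he hss L hLideal hLideal' hLmod m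
end

section
/- Let G be a finite abelian group of order n acting on a product of copies of k with primitive idempotent basis F, k containing a primitive n-th root of unity λ. Fix f ∈ F with G-orbit of size r, and fix m. Define, for u,v in a transversal S of the stabilizer, E_{uv} = r(g^{(u)}·f # e_m)(g^{(v)}·f # 1) in B # k[G]. Then E_{uv}E_{rs} = δ_{v,r}E_{us}, the E_{uv} are linearly independent, and their span M_{f,m} is a minimal two-sided ideal of B # k[G] isomorphic to M_r(k). -/
/-!
The elements `E u v` form a system of matrix units, and everything else follows from that:
nonzero matrix units are linearly independent and span a copy of `M_r(k)`, and since
`E u p * x * E q v` is the `(p, q)`-coefficient of `x` times `E u v`, a nonzero two-sided ideal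
inside their span contains every `E u v`.

The matrix-unit relations reduce to `δ[a] e δ[b] e = r⁻¹ • δ[a] e` for `a`, `b` in the orbit of `f`:
expanding `e = n⁻¹ ∑ χ(g) g`, only the `n / r` elements `g` with `g • b = a` survive, and for each
of them `χ(g) g e = e`. Multiplying an `E u v` by a basis element `δ[x] g` of `B # k[G]`, on
either side, gives a scalar multiple of another `E u' v'` or zero, so their span is an ideal.
-/

open Finset MulAction

theorem Pi.single_one_mul_single_one {F R : Type*} [DecidableEq F] [MulZeroOneClass R]
    (x y : F) :
    (Pi.single x 1 : F → R) * Pi.single y 1 = if x = y then Pi.single x 1 else 0 := by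
  rw [← Pi.single_mul_left, one_mul, Pi.single_apply]
  split_ifs <;> simp

theorem MulAction.card_filter_smul_eq_mul_card_orbit {G F : Type*} [Group G] [Fintype G]
    [MulAction G F] [DecidableEq F] {a b : F} (hab : a ∈ orbit G b) :
    #{g : G | g • b = a} * Nat.card (orbit G b) = Fintype.card G := by
  obtain ⟨h, rfl⟩ := hab
  have hcoset : #{g : G | g • b = h • b} = #{g : G | g • b = b} :=
    card_nbij' (h⁻¹ * ·) (h * ·) (fun g hg => by simp_all [mul_smul])
      (fun g hg => by simp_all [mul_smul]) (fun g _ => by simp) (fun g _ => by simp)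
  have hstab : #{g : G | g • b = b} = Nat.card (stabilizer G b) := by
    simp [Nat.card_eq_fintype_card, Fintype.card_subtype, mem_stabilizer_iff]
  rw [hcoset, hstab, Nat.card_coe_set_eq, ← index_stabilizer, Subgroup.card_mul_index,
    Nat.card_eq_fintype_card]

section SpanMul

variable {k A : Type*} [CommSemiring k] [Semiring A] [Algebra k A] {S T : Set A}

theorem Submodule.mul_mem_span_left_of_span_eq_top (hS : Submodule.span k S = ⊤)
    (hST : ∀ s ∈ S, ∀ t ∈ T, s * t ∈ Submodule.span k T) (a : A) {x : A}
    (hx : x ∈ Submodule.span k T) : a * x ∈ Submodule.span k T := by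
  have hax : a * x ∈ Submodule.span k S * Submodule.span k T :=
    Submodule.mul_mem_mul (hS ▸ Submodule.mem_top) hx
  rw [Submodule.span_mul_span] at hax
  refine Submodule.span_le.2 ?_ hax
  rintro _ ⟨s, hs, t, ht, rfl⟩
  exact hST s hs t ht

theorem Submodule.mul_mem_span_right_of_span_eq_top (hS : Submodule.span k S = ⊤)
    (hTS : ∀ t ∈ T, ∀ s ∈ S, t * s ∈ Submodule.span k T) (a : A) {x : A}
    (hx : x ∈ Submodule.span k T) : x * a ∈ Submodule.span k T := by
  have hxa : x * a ∈ Submodule.span k T * Submodule.span k S :=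
    Submodule.mul_mem_mul hx (hS ▸ Submodule.mem_top)
  rw [Submodule.span_mul_span] at hxa
  refine Submodule.span_le.2 ?_ hxa
  rintro _ ⟨t, ht, s, hs, rfl⟩
  exact hTS t ht s hs

end SpanMul

section MatrixUnits

variable {k A ι : Type*} [Field k] [Ring A] [Algebra k A] [Fintype ι] [DecidableEq ι]

def IsMatrixUnits (E : ι → ι → A) : Prop :=
  ∀ u v p q, E u v * E p q = if v = p then E u q else 0

namespace IsMatrixUnits

variable {E : ι → ι → A}

theorem mul_sum_smul_mul (hE : IsMatrixUnits E) (c : ι × ι → k) (u p q v : ι) :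
    E u p * (∑ j : ι × ι, c j • E j.1 j.2) * E q v = c (p, q) • E u v := by
  rw [Finset.mul_sum, Finset.sum_mul, Fintype.sum_eq_single (p, q)]
  · rw [mul_smul_comm, smul_mul_assoc, hE, if_pos rfl, hE, if_pos rfl]
  · rintro ⟨i, j⟩ hij
    rw [mul_smul_comm, smul_mul_assoc, hE]
    split_ifs with hi
    · rw [hE, if_neg fun hj => hij (Prod.ext hi.symm hj), smul_zero]
    · rw [zero_mul, smul_zero]

theorem linearIndependent (hE : IsMatrixUnits E) (hne : ∀ u v, E u v ≠ 0) :
    LinearIndependent k (fun uv : ι × ι => E uv.1 uv.2) := by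
  refine Fintype.linearIndependent_iff.2 fun c hc ⟨u, v⟩ => ?_
  have h := hE.mul_sum_smul_mul c u u v v
  rw [hc, mul_zero, zero_mul, eq_comm, smul_eq_zero] at h
  exact h.resolve_right (hne u v)

theorem eq_bot_or_eq_span (hE : IsMatrixUnits E) (J : Submodule k A)
    (hJ : ∀ a x, x ∈ J → a * x ∈ J ∧ x * a ∈ J)
    (hJE : J ≤ Submodule.span k (Set.range fun uv : ι × ι => E uv.1 uv.2)) :
    J = ⊥ ∨ J = Submodule.span k (Set.range fun uv : ι × ι => E uv.1 uv.2) := by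
  refine or_iff_not_imp_left.2 fun hJ0 => le_antisymm hJE ?_
  obtain ⟨x, hxJ, hx0⟩ := (Submodule.ne_bot_iff J).1 hJ0
  obtain ⟨c, rfl⟩ := Submodule.mem_span_range_iff_exists_fun k |>.1 (hJE hxJ)
  obtain ⟨⟨p, q⟩, hpq⟩ : ∃ j, c j ≠ 0 := by
    by_contra! hc
    exact hx0 (Finset.sum_eq_zero fun j _ => by rw [hc j, zero_smul])
  rw [Submodule.span_le]
  rintro _ ⟨⟨u, v⟩, rfl⟩
  have hmem := (hJ (E q v) _ (hJ (E u p) _ hxJ).1).2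
  rw [hE.mul_sum_smul_mul] at hmem
  simpa [smul_smul, inv_mul_cancel₀ hpq] using J.smul_mem (c (p, q))⁻¹ hmem

theorem stdBasis_constr_mul (hE : IsMatrixUnits E) (X Y : Matrix ι ι k) :
    (Matrix.stdBasis k ι ι).constr k (fun uv => E uv.1 uv.2) (X * Y) =
      (Matrix.stdBasis k ι ι).constr k (fun uv => E uv.1 uv.2) X *
        (Matrix.stdBasis k ι ι).constr k (fun uv => E uv.1 uv.2) Y := by
  set φ := (Matrix.stdBasis k ι ι).constr k (fun uv : ι × ι => E uv.1 uv.2)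
  have hφ : ∀ u v, φ (Matrix.single u v 1) = E u v := fun u v => by
    rw [← Matrix.stdBasis_eq_single, Module.Basis.constr_basis]
  have hbilin := LinearMap.ext_basis (Matrix.stdBasis k ι ι) (Matrix.stdBasis k ι ι)
    (B := (LinearMap.mul k (Matrix ι ι k)).compr₂ φ) (B' := (LinearMap.mul k A).compl₁₂ φ φ)
    fun ⟨u, v⟩ ⟨p, q⟩ => by
      simp only [LinearMap.compr₂_apply, LinearMap.compl₁₂_apply, LinearMap.mul_apply',
        Matrix.stdBasis_eq_single, hφ, hE u v p q]
      split_ifs with hvp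
      · rw [hvp, Matrix.single_mul_single_same, one_mul, hφ]
      · rw [Matrix.single_mul_single_of_ne (h := hvp), map_zero]
  exact LinearMap.congr_fun₂ hbilin X Y

end IsMatrixUnits

end MatrixUnits

section SmashProduct

variable {k G F A : Type*} [Field k] [Group G] [MulAction G F] [DecidableEq F] [Ring A]
  [Algebra k A]

def IsCovariantPair (ιB : (F → k) →ₐ[k] A) (ιG : G →* A) : Prop :=
  ∀ (g : G) (b : F → k), ιG g * ιB b = ιB (fun x => b (g⁻¹ • x)) * ιG g

variable {ιB : (F → k) →ₐ[k] A} {ιG : G →* A}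

local notation "δ[" x "]" => ιB (Pi.single x 1)

theorem single_mul_single (x y : F) : δ[x] * δ[y] = if x = y then δ[x] else 0 := by
  rw [← map_mul, Pi.single_one_mul_single_one]
  split_ifs <;> simp

theorem IsCovariantPair.mul_single (hcov : IsCovariantPair ιB ιG) (g : G) (x : F) :
    ιG g * δ[x] = δ[g • x] * ιG g := by
  rw [hcov]
  congr 3
  funext z
  simp [Pi.single_apply, inv_smul_eq_iff]

theorem IsCovariantPair.single_mul_mul_single (hcov : IsCovariantPair ιB ιG) (a b : F) (g : G) :
    δ[a] * ιG g * δ[b] = if g • b = a then δ[a] * ιG g else 0 := by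
  rw [mul_assoc, hcov.mul_single, ← mul_assoc, single_mul_single]
  split_ifs with h h' h' <;> simp_all [eq_comm]

variable [Fintype G]

def charIdempotent (ψ : G →* kˣ) (ιG : G →* A) : A :=
  (Fintype.card G : k)⁻¹ • ∑ g : G, ((ψ g : kˣ) : k) • ιG g

theorem charIdempotent_mul (ψ : G →* kˣ) (ιG : G →* A) (g : G) :
    charIdempotent ψ ιG * ιG g = ((ψ g⁻¹ : kˣ) : k) • charIdempotent ψ ιG := by
  rw [charIdempotent, smul_mul_assoc, smul_comm ((ψ g⁻¹ : kˣ) : k), Finset.sum_mul,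
    Finset.smul_sum (r := ((ψ g⁻¹ : kˣ) : k))]
  congr 1
  refine Fintype.sum_equiv (Equiv.mulRight g) _ _ fun h => ?_
  rw [smul_mul_assoc, ← map_mul, smul_smul, Equiv.coe_mulRight, mul_comm ((ψ g⁻¹ : kˣ) : k),
    ← Units.val_mul, ← map_mul, mul_inv_cancel_right]

theorem mul_charIdempotent (ψ : G →* kˣ) (ιG : G →* A) (g : G) :
    ιG g * charIdempotent ψ ιG = ((ψ g⁻¹ : kˣ) : k) • charIdempotent ψ ιG := by
  rw [charIdempotent, mul_smul_comm, smul_comm ((ψ g⁻¹ : kˣ) : k), Finset.mul_sum,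
    Finset.smul_sum (r := ((ψ g⁻¹ : kˣ) : k))]
  congr 1
  refine Fintype.sum_equiv (Equiv.mulLeft g) _ _ fun h => ?_
  rw [mul_smul_comm, ← map_mul, smul_smul, Equiv.coe_mulLeft, ← Units.val_mul, ← map_mul,
    inv_mul_cancel_left]

theorem IsCovariantPair.single_mul_charIdempotent_mul_single (hcov : IsCovariantPair ιB ιG)
    (ψ : G →* kˣ) (a b : F) :
    δ[a] * charIdempotent ψ ιG * δ[b] =
      (Fintype.card G : k)⁻¹ • ∑ g with g • b = a, ((ψ g : kˣ) : k) • (δ[a] * ιG g) := by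
  simp only [charIdempotent, mul_smul_comm, smul_mul_assoc, Finset.mul_sum, Finset.sum_mul,
    hcov.single_mul_mul_single, Finset.sum_filter]
  congr 1
  refine Finset.sum_congr rfl fun g _ => ?_
  split_ifs <;> simp

theorem IsCovariantPair.single_mul_charIdempotent_mul_single_mul_charIdempotent
    (hcov : IsCovariantPair ιB ιG) (ψ : G →* kˣ) (a b : F) :
    δ[a] * charIdempotent ψ ιG * δ[b] * charIdempotent ψ ιG =
      ((#{g : G | g • b = a} : k) / Fintype.card G) • (δ[a] * charIdempotent ψ ιG) := by
  rw [hcov.single_mul_charIdempotent_mul_single, smul_mul_assoc, Finset.sum_mul,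
    Finset.sum_congr rfl fun g _ => ?_, Finset.sum_const, ← Nat.cast_smul_eq_nsmul k, smul_smul,
    div_eq_inv_mul]
  rw [smul_mul_assoc, mul_assoc, mul_charIdempotent, mul_smul_comm, smul_smul, ← Units.val_mul,
    ← map_mul, mul_inv_cancel, map_one, Units.val_one, one_smul]

theorem natCast_card_orbit_ne_zero (hcard : (Fintype.card G : k) ≠ 0) (b : F) :
    (Nat.card (orbit G b) : k) ≠ 0 := by
  intro h
  apply hcard
  rw [← card_filter_smul_eq_mul_card_orbit (mem_orbit_self b), Nat.cast_mul, h, mul_zero]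

theorem IsCovariantPair.single_mul_charIdempotent_mul_single_mul_charIdempotent_of_mem_orbit
    (hcov : IsCovariantPair ιB ιG) (hcard : (Fintype.card G : k) ≠ 0) (ψ : G →* kˣ) {a b : F}
    (hab : a ∈ orbit G b) :
    δ[a] * charIdempotent ψ ιG * δ[b] * charIdempotent ψ ιG =
      (Nat.card (orbit G b) : k)⁻¹ • (δ[a] * charIdempotent ψ ιG) := by
  rw [hcov.single_mul_charIdempotent_mul_single_mul_charIdempotent,
    ← card_filter_smul_eq_mul_card_orbit hab, Nat.cast_mul, div_mul_cancel_left₀]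
  rw [← card_filter_smul_eq_mul_card_orbit hab, Nat.cast_mul] at hcard
  exact left_ne_zero_of_mul hcard

variable (ιB ιG) in
/-- The paper's `E_{uv} = r (g⁽ᵘ⁾·f # e_m)(g⁽ᵛ⁾·f # 1)`, indexed by the points
`a = g⁽ᵘ⁾ • f` and `b = g⁽ᵛ⁾ • f` of the orbit of `f` rather than by the transversal. -/
noncomputable def orbitMatrixUnit (ψ : G →* kˣ) (f a b : F) : A :=
  (Nat.card (orbit G f) : k) • (δ[a] * charIdempotent ψ ιG * δ[b])

theorem IsCovariantPair.orbitMatrixUnit_mul (hcov : IsCovariantPair ιB ιG)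
    (hcard : (Fintype.card G : k) ≠ 0) (ψ : G →* kˣ) {f a b : F} (c d : F)
    (ha : a ∈ orbit G f) (hb : b ∈ orbit G f) :
    orbitMatrixUnit ιB ιG ψ f a b * orbitMatrixUnit ιB ιG ψ f c d =
      if b = c then orbitMatrixUnit ιB ιG ψ f a d else 0 := by
  have hassoc : δ[a] * charIdempotent ψ ιG * δ[b] * (δ[c] * charIdempotent ψ ιG * δ[d]) =
      δ[a] * charIdempotent ψ ιG * (δ[b] * δ[c]) * (charIdempotent ψ ιG * δ[d]) := by
    simp only [mul_assoc]
  rw [orbitMatrixUnit, orbitMatrixUnit, smul_mul_smul_comm, hassoc, single_mul_single]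
  split_ifs
  · rw [← mul_assoc, hcov.single_mul_charIdempotent_mul_single_mul_charIdempotent_of_mem_orbit
      hcard ψ (orbit_eq_iff.2 hb ▸ ha), orbit_eq_iff.2 hb, smul_mul_assoc, smul_smul, mul_assoc,
      mul_inv_cancel₀ (natCast_card_orbit_ne_zero hcard f), mul_one, orbitMatrixUnit]
  · rw [mul_zero, zero_mul, smul_zero]

theorem IsCovariantPair.orbitMatrixUnit_ne_zero (hcov : IsCovariantPair ιB ιG)
    (hcard : (Fintype.card G : k) ≠ 0) (ψ : G →* kˣ) (f : F) {a b : F}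
    (hli : LinearIndependent k fun g => δ[a] * ιG g) (hab : a ∈ orbit G b) :
    orbitMatrixUnit ιB ιG ψ f a b ≠ 0 := by
  obtain ⟨g, hg⟩ := hab
  rw [orbitMatrixUnit, hcov.single_mul_charIdempotent_mul_single, smul_smul]
  refine smul_ne_zero (mul_ne_zero (natCast_card_orbit_ne_zero hcard f) (inv_ne_zero hcard))
    fun hsum => (ψ g).ne_zero ?_
  exact linearIndependent_iff'.1 hli _ _ hsum g (by simpa using hg)

theorem IsCovariantPair.single_mul_of_mul_orbitMatrixUnit (hcov : IsCovariantPair ιB ιG)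
    (ψ : G →* kˣ) (x : F) (g : G) (f a b : F) :
    δ[x] * ιG g * orbitMatrixUnit ιB ιG ψ f a b =
      if x = g • a then ((ψ g⁻¹ : kˣ) : k) • orbitMatrixUnit ιB ιG ψ f (g • a) b else 0 := by
  have hassoc : δ[x] * ιG g * (δ[a] * charIdempotent ψ ιG * δ[b]) =
      δ[x] * (ιG g * δ[a]) * charIdempotent ψ ιG * δ[b] := by
    simp only [mul_assoc]
  rw [orbitMatrixUnit, mul_smul_comm, hassoc, hcov.mul_single, ← mul_assoc, single_mul_single]
  split_ifs with hx
  · rw [mul_assoc _ (ιG g), mul_charIdempotent, mul_smul_comm, smul_mul_assoc, smul_comm, hx,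
      orbitMatrixUnit]
  · rw [zero_mul, zero_mul, zero_mul, smul_zero]

theorem IsCovariantPair.orbitMatrixUnit_mul_single_mul_of (hcov : IsCovariantPair ιB ιG)
    (ψ : G →* kˣ) (x : F) (g : G) (f a b : F) :
    orbitMatrixUnit ιB ιG ψ f a b * (δ[x] * ιG g) =
      if b = x then ((ψ g⁻¹ : kˣ) : k) • orbitMatrixUnit ιB ιG ψ f a (g⁻¹ • b) else 0 := by
  have hassoc : δ[a] * charIdempotent ψ ιG * δ[b] * (δ[x] * ιG g) =
      δ[a] * charIdempotent ψ ιG * (δ[b] * δ[x] * ιG g) := by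
    simp only [mul_assoc]
  rw [orbitMatrixUnit, smul_mul_assoc, hassoc, single_mul_single]
  split_ifs
  · have hmove := hcov.mul_single g (g⁻¹ • b)
    rw [smul_inv_smul] at hmove
    rw [← hmove, ← mul_assoc, mul_assoc _ _ (ιG g), charIdempotent_mul, mul_smul_comm,
      smul_mul_assoc, smul_comm, orbitMatrixUnit]
  · rw [zero_mul, mul_zero, smul_zero]

theorem IsCovariantPair.mul_mem_span_orbitMatrixUnit (hcov : IsCovariantPair ιB ιG)
    (ψ : G →* kˣ) (hspan : Submodule.span k (Set.range fun p : F × G => δ[p.1] * ιG p.2) = ⊤)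
    (f : F) (y : A) {x : A}
    (hx : x ∈ Submodule.span k (Set.image2 (orbitMatrixUnit ιB ιG ψ f) (orbit G f) (orbit G f))) :
    y * x ∈ Submodule.span k (Set.image2 (orbitMatrixUnit ιB ιG ψ f) (orbit G f) (orbit G f)) ∧
      x * y ∈ Submodule.span k
        (Set.image2 (orbitMatrixUnit ιB ιG ψ f) (orbit G f) (orbit G f)) := by
  have hmem : ∀ c : k, ∀ a ∈ orbit G f, ∀ b ∈ orbit G f, ∀ P : Prop, [Decidable P] →
      (if P then c • orbitMatrixUnit ιB ιG ψ f a b else 0) ∈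
        Submodule.span k (Set.image2 (orbitMatrixUnit ιB ιG ψ f) (orbit G f) (orbit G f)) := by
    intro c a ha b hb P _
    split_ifs
    · exact Submodule.smul_mem _ _ (Submodule.subset_span ⟨a, ha, b, hb, rfl⟩)
    · exact Submodule.zero_mem _
  constructor
  · refine Submodule.mul_mem_span_left_of_span_eq_top hspan ?_ y hx
    rintro _ ⟨⟨z, g⟩, rfl⟩ _ ⟨a, ha, b, hb, rfl⟩
    rw [hcov.single_mul_of_mul_orbitMatrixUnit]
    exact hmem _ _ (mem_orbit_of_mem_orbit g ha) b hb _
  · refine Submodule.mul_mem_span_right_of_span_eq_top hspan ?_ y hx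
    rintro _ ⟨a, ha, b, hb, rfl⟩ _ ⟨⟨z, g⟩, rfl⟩
    rw [hcov.orbitMatrixUnit_mul_single_mul_of]
    exact hmem _ a ha _ (mem_orbit_of_mem_orbit g⁻¹ hb) _

end SmashProduct

theorem stmt16_general (k G F A : Type) [Field k] [CommGroup G] [Fintype G]
    [DecidableEq F] [MulAction G F]
    (χ : G →* G →* kˣ)
    (hcard : (Fintype.card G : k) ≠ 0)
    [Ring A] [Algebra k A] (ιB : (F → k) →ₐ[k] A) (ιG : G →* A)
    (hcomm : ∀ (g : G) (b : F → k), ιG g * ιB b = ιB (fun x => b (g⁻¹ • x)) * ιG g)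
    (bA : Module.Basis (F × G) k A)
    (hbA : ∀ p : F × G, bA p = ιB (Pi.single p.1 1) * ιG p.2)
    (e : G → A)
    (he : ∀ m : G, e m = (Fintype.card G : k)⁻¹ • ∑ g : G, ((χ m g : kˣ) : k) • ιG g)
    (f : F) (r : ℕ) (hr : r = Nat.card (MulAction.orbit G f))
    (s : Fin r → G)
    (hsinj : Function.Injective fun u : Fin r => s u • f)
    (hsorb : ∀ x ∈ MulAction.orbit G f, ∃ u : Fin r, s u • f = x)
    (m : G)
    (E : Fin r → Fin r → A)
    (hE : ∀ u v : Fin r, E u v =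
      (r : k) • ((ιB (Pi.single (s u • f) 1) * e m) * ιB (Pi.single (s v • f) 1))) :
    (∀ u v p q : Fin r, E u v * E p q = if v = p then E u q else 0) ∧
    LinearIndependent k (fun uv : Fin r × Fin r => E uv.1 uv.2) ∧
    (∀ (a x : A), x ∈ Submodule.span k {x : A | ∃ u v : Fin r, x = E u v} →
      a * x ∈ Submodule.span k {x : A | ∃ u v : Fin r, x = E u v} ∧
      x * a ∈ Submodule.span k {x : A | ∃ u v : Fin r, x = E u v}) ∧
    Submodule.span k {x : A | ∃ u v : Fin r, x = E u v} ≠ ⊥ ∧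
    (∀ J : Submodule k A, (∀ (a x : A), x ∈ J → a * x ∈ J ∧ x * a ∈ J) →
      J ≤ Submodule.span k {x : A | ∃ u v : Fin r, x = E u v} →
      J = ⊥ ∨ J = Submodule.span k {x : A | ∃ u v : Fin r, x = E u v}) ∧
    (∃ φ : Matrix (Fin r) (Fin r) k →ₗ[k] A, Function.Injective φ ∧
      LinearMap.range φ = Submodule.span k {x : A | ∃ u v : Fin r, x = E u v} ∧
      ∀ X Y : Matrix (Fin r) (Fin r) k, φ (X * Y) = φ X * φ Y) := by
  have hcov : IsCovariantPair ιB ιG := hcomm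
  have hEU : ∀ u v, E u v = orbitMatrixUnit ιB ιG (χ m) f (s u • f) (s v • f) := fun u v => by
    rw [hE, he, hr]
    rfl
  have hunits : IsMatrixUnits E := fun u v p q => by
    simp only [hEU]
    rw [hcov.orbitMatrixUnit_mul hcard _ _ _ (mem_orbit f _) (mem_orbit f _)]
    exact if_congr hsinj.eq_iff rfl rfl
  have hne : ∀ u v, E u v ≠ 0 := fun u v => hEU u v ▸ hcov.orbitMatrixUnit_ne_zero hcard _ f
    (by simpa [Function.comp_def, hbA] using
      bA.linearIndependent.comp _ (Prod.mk_right_injective (s u • f)))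
    (smul_mem_orbit_smul (s u) (s v) f)
  have horbit : orbit G f = Set.range fun u => s u • f :=
    Set.Subset.antisymm hsorb (Set.range_subset_iff.2 fun u => mem_orbit f (s u))
  have hrange : {x | ∃ u v, x = E u v} = Set.range fun uv : Fin r × Fin r => E uv.1 uv.2 := by
    ext x
    simp [eq_comm]
  have himage : (Set.range fun uv : Fin r × Fin r => E uv.1 uv.2) =
      Set.image2 (orbitMatrixUnit ιB ιG (χ m) f) (orbit G f) (orbit G f) := by
    rw [horbit, Set.image2_range]
    simp only [hEU]
  obtain ⟨u, -⟩ := hsorb f (mem_orbit_self f)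
  rw [hrange]
  refine ⟨hunits, hunits.linearIndependent hne, fun a x hx => ?_, ?_, hunits.eq_bot_or_eq_span, ?_⟩
  · rw [himage] at hx ⊢
    exact hcov.mul_mem_span_orbitMatrixUnit _ (by simpa only [← hbA] using bA.span_eq) f a hx
  · rw [Ne, Submodule.span_eq_bot]
    exact fun h => hne u u (h _ ⟨(u, u), rfl⟩)
  · exact ⟨_, Module.Basis.injective_constr_of_linearIndependent _ (hunits.linearIndependent hne),
      Module.Basis.constr_range _ _, hunits.stdBasis_constr_mul⟩

/-- Let `G` be a finite abelian group of order `n` acting on the set `F`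
(hence on `B = F → k`, a product of copies of `k` with primitive idempotent basis `F`), `k`
containing a primitive `n`-th root of unity, with character pairing `χ`; let `A = B # k[G]`
be the smash product (presented by `ιB`, `ιG`) and `e_m ∈ A` the character idempotents of
`k[G]`.  Fix `f ∈ F` with `G`-orbit of size `r`, enumerated without repetition by a
transversal `s : Fin r → G`, and fix `m ∈ G`.  Define
`E u v = r • (ιB(δ_{s u • f}) * e_m) * ιB(δ_{s v • f})`.  Then `E u v * E p q = δ_{v p} E u q`,
the `E u v` are linearly independent, and their span `M_{f,m}` is a minimal two-sided ideal
of `A` isomorphic (as a multiplicative `k`-linear object) to the matrix algebra `M_r(k)`. -/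
theorem stmt16 (k G F A : Type) [Field k] [CommGroup G] [Fintype G]
    [Fintype F] [DecidableEq F] [MulAction G F]
    (χ : G →* G →* kˣ)
    (hχ : ∀ m : G, m ≠ 1 → ∑ g : G, ((χ m g : kˣ) : k) = 0)
    (hχ' : ∀ g : G, g ≠ 1 → ∑ m : G, ((χ m g : kˣ) : k) = 0)
    (lam : k) (hlam : IsPrimitiveRoot lam (Fintype.card G))
    (hcard : (Fintype.card G : k) ≠ 0)
    [Ring A] [Algebra k A] (ιB : (F → k) →ₐ[k] A) (ιG : G →* A)
    (hcomm : ∀ (g : G) (b : F → k), ιG g * ιB b = ιB (fun x => b (g⁻¹ • x)) * ιG g)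
    (bA : Module.Basis (F × G) k A)
    (hbA : ∀ p : F × G, bA p = ιB (Pi.single p.1 1) * ιG p.2)
    (e : G → A)
    (he : ∀ m : G, e m = (Fintype.card G : k)⁻¹ • ∑ g : G, ((χ m g : kˣ) : k) • ιG g)
    (f : F) (r : ℕ) (hr : r = Nat.card (MulAction.orbit G f))
    (s : Fin r → G)
    (hsinj : Function.Injective fun u : Fin r => s u • f)
    (hsorb : ∀ x ∈ MulAction.orbit G f, ∃ u : Fin r, s u • f = x)
    (m : G)
    (E : Fin r → Fin r → A)
    (hE : ∀ u v : Fin r, E u v =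
      (r : k) • ((ιB (Pi.single (s u • f) 1) * e m) * ιB (Pi.single (s v • f) 1))) :
    (∀ u v p q : Fin r, E u v * E p q = if v = p then E u q else 0) ∧
    LinearIndependent k (fun uv : Fin r × Fin r => E uv.1 uv.2) ∧
    (∀ (a x : A), x ∈ Submodule.span k {x : A | ∃ u v : Fin r, x = E u v} →
      a * x ∈ Submodule.span k {x : A | ∃ u v : Fin r, x = E u v} ∧
      x * a ∈ Submodule.span k {x : A | ∃ u v : Fin r, x = E u v}) ∧
    Submodule.span k {x : A | ∃ u v : Fin r, x = E u v} ≠ ⊥ ∧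
    (∀ J : Submodule k A, (∀ (a x : A), x ∈ J → a * x ∈ J ∧ x * a ∈ J) →
      J ≤ Submodule.span k {x : A | ∃ u v : Fin r, x = E u v} →
      J = ⊥ ∨ J = Submodule.span k {x : A | ∃ u v : Fin r, x = E u v}) ∧
    (∃ φ : Matrix (Fin r) (Fin r) k →ₗ[k] A, Function.Injective φ ∧
      LinearMap.range φ = Submodule.span k {x : A | ∃ u v : Fin r, x = E u v} ∧
      ∀ X Y : Matrix (Fin r) (Fin r) k, φ (X * Y) = φ X * φ Y) :=
  stmt16_general k G F A χ hcard ιB ιG hcomm bA hbA e he f r hr s hsinj hsorb m E hE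
end
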